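/- arXiv:0809.0011 — 11 statements merged into one kernel-verified Lean document; each statement's English description precedes it below -/
import Mathlib

section
/- (Lemma 1.) Let O, P ∈ EuclideanSpace ℝ (Fin 2), V a nonzero vector, and define the trajectory p(t) = P + t • V. Let R ≥ 0 and t₁ < t₂ be such that dist (p t₁) O = R and dist (p t₂) O = R (the entry and exit points of the trajectory on the circle of center O and radius R). Let d = Metric.infDist O (Set.range p) be the closest distance of the trajectory to O. Then ‖V‖ * (t₂ - t₁) = 2 * Real.sqrt (R^2 - d^2). In particular, given the entry and exit times, knowledge of the closest distance d and knowledge of the speed ‖V‖ are equivalent. -/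
/-!
Let `W` be the vector from `O` to the position at the mid-time `(t₁ + t₂) / 2`, and
`s = (t₂ - t₁) / 2`. The entry and exit points are `O + W ∓ s • V`; since they are equally far
from `O`, the parallelogram law forces `W ⟂ V`. Pythagoras then shows that the mid-time position is
the point of the line closest to `O`, so `d = ‖W‖`, and that `R² = d² + (s ‖V‖)²`.
-/

open Metric RealInnerProductSpace

variable {E : Type*} [NormedAddCommGroup E] [InnerProductSpace ℝ E]

theorem add_smul_sub_eq_add_smul_sub_add_smul (P V O : E) (t t₀ : ℝ) :
    P + t • V - O = (P + t₀ • V - O) + (t - t₀) • V := by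
  rw [sub_smul]; abel

theorem norm_add_smul_sq_sub_norm_sub_smul_sq (W V : E) (s : ℝ) :
    ‖W + s • V‖ ^ 2 - ‖W - s • V‖ ^ 2 = 4 * s * ⟪W, V⟫ := by
  rw [norm_add_sq_real, norm_sub_sq_real, real_inner_smul_right]
  ring

theorem inner_eq_zero_of_norm_sub_smul_eq_norm_add_smul {W V : E} {s : ℝ} (hs : s ≠ 0)
    (h : ‖W - s • V‖ = ‖W + s • V‖) : ⟪W, V⟫ = 0 := by
  have h4 : 4 * s * ⟪W, V⟫ = 0 := by
    rw [← norm_add_smul_sq_sub_norm_sub_smul_sq, h, sub_self]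
  simpa [hs] using h4

theorem norm_add_smul_sq_of_inner_eq_zero {W V : E} (h : ⟪W, V⟫ = 0) (t : ℝ) :
    ‖W + t • V‖ ^ 2 = ‖W‖ ^ 2 + (t * ‖V‖) ^ 2 := by
  rw [norm_add_sq_real, real_inner_smul_right, h, norm_smul, Real.norm_eq_abs, mul_pow, sq_abs,
    mul_pow]
  ring

theorem norm_le_norm_add_smul_of_inner_eq_zero {W V : E} (h : ⟪W, V⟫ = 0) (t : ℝ) :
    ‖W‖ ≤ ‖W + t • V‖ := by
  refine le_of_sq_le_sq ?_ (norm_nonneg _)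
  rw [norm_add_smul_sq_of_inner_eq_zero h]
  exact le_add_of_nonneg_right (sq_nonneg _)

theorem infDist_range_line_eq_dist {O P V : E} {t₀ : ℝ} (h : ⟪P + t₀ • V - O, V⟫ = 0) :
    infDist O (Set.range fun t : ℝ => P + t • V) = dist O (P + t₀ • V) := by
  refine le_antisymm (infDist_le_dist_of_mem ⟨t₀, rfl⟩)
    ((le_infDist (Set.range_nonempty _)).2 ?_)
  rintro _ ⟨t, rfl⟩
  rw [dist_comm, dist_eq_norm, dist_comm, dist_eq_norm,
    add_smul_sub_eq_add_smul_sub_add_smul P V O t t₀]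
  exact norm_le_norm_add_smul_of_inner_eq_zero h _

theorem speed_mul_time_eq_chord_general (O P V : EuclideanSpace ℝ (Fin 2))
    (R : ℝ) (t₁ t₂ : ℝ) (ht : t₁ < t₂)
    (p : ℝ → EuclideanSpace ℝ (Fin 2)) (hp : p = fun t => P + t • V)
    (h₁ : dist (p t₁) O = R) (h₂ : dist (p t₂) O = R)
    (d : ℝ) (hd : d = Metric.infDist O (Set.range p)) :
    ‖V‖ * (t₂ - t₁) = 2 * Real.sqrt (R ^ 2 - d ^ 2) := by
  subst hp hd
  set t₀ := (t₁ + t₂) / 2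
  set s := (t₂ - t₁) / 2
  set W := P + t₀ • V - O
  have hs : 0 < s := half_pos (sub_pos.2 ht)
  have hentry : dist (P + t₁ • V) O = ‖W - s • V‖ := by
    rw [dist_eq_norm, add_smul_sub_eq_add_smul_sub_add_smul P V O t₁ t₀,
      show t₁ - t₀ = -s by ring, neg_smul, ← sub_eq_add_neg]
  have hexit : dist (P + t₂ • V) O = ‖W + s • V‖ := by
    rw [dist_eq_norm, add_smul_sub_eq_add_smul_sub_add_smul P V O t₂ t₀, show t₂ - t₀ = s by ring]
  have horth : ⟪W, V⟫ = 0 :=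
    inner_eq_zero_of_norm_sub_smul_eq_norm_add_smul hs.ne'
      ((hentry.symm.trans h₁).trans (hexit.symm.trans h₂).symm)
  have hchord : R ^ 2 - ‖W‖ ^ 2 = (s * ‖V‖) ^ 2 := by
    rw [← h₂, hexit, norm_add_smul_sq_of_inner_eq_zero horth]; ring
  rw [infDist_range_line_eq_dist horth, dist_comm, dist_eq_norm, hchord,
    Real.sqrt_sq (mul_nonneg hs.le (norm_nonneg V))]
  ring

/-- Lemma 1: given entry and exit times `t₁ < t₂` of the uniform linear
trajectory `p t = P + t • V` on the circle of center `O` and radius `R`, the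
speed `‖V‖` and the closest distance `d` of the trajectory to `O` determine
each other via `‖V‖ * (t₂ - t₁) = 2 * √(R² - d²)`. -/
theorem speed_mul_time_eq_chord (O P V : EuclideanSpace ℝ (Fin 2)) (hV : V ≠ 0)
    (R : ℝ) (hR : 0 ≤ R) (t₁ t₂ : ℝ) (ht : t₁ < t₂)
    (p : ℝ → EuclideanSpace ℝ (Fin 2)) (hp : p = fun t => P + t • V)
    (h₁ : dist (p t₁) O = R) (h₂ : dist (p t₂) O = R)
    (d : ℝ) (hd : d = Metric.infDist O (Set.range p)) :
    ‖V‖ * (t₂ - t₁) = 2 * Real.sqrt (R ^ 2 - d ^ 2) :=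
  speed_mul_time_eq_chord_general O P V R t₁ t₂ ht p hp h₁ h₂ d hd
end

section
/- (Lemma 2.) Let O, P ∈ EuclideanSpace ℝ (Fin 2), V a nonzero vector, and p(t) = P + t • V. Let R ≥ 0, let t₁ be a time with dist (p t₁) O = R, and let d = Metric.infDist O (Set.range p). Suppose the bomber is entering the circle at time t₁, i.e. ⟪V, O - p t₁⟫ ≥ 0 (the inner product of the velocity with the vector toward the center is nonnegative). Then the exit time is determined: setting t₂ = t₁ + 2 * Real.sqrt (R^2 - d^2) / ‖V‖, one has dist (p t₂) O = R. (Given the entry time, the closest distance and the speed, one can calculate the exit time.) -/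
open scoped RealInnerProductSpace

set_option maxHeartbeats 1000000 in
/-- Lemma 2: given the entry time `t₁` (the bomber is entering, i.e. the
velocity points weakly toward the center), the closest distance `d` of the
line to `O` and the speed `‖V‖`, the exit time is
`t₂ = t₁ + 2 √(R² - d²) / ‖V‖`. -/
theorem exit_time_from_entry (O P V : EuclideanSpace ℝ (Fin 2)) (hV : V ≠ 0)
    (R : ℝ) (hR : 0 ≤ R)
    (p : ℝ → EuclideanSpace ℝ (Fin 2)) (hp : p = fun t => P + t • V)
    (t₁ : ℝ) (h₁ : dist (p t₁) O = R)
    (hin : ⟪V, O - p t₁⟫ ≥ 0)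
    (d : ℝ) (hd : d = Metric.infDist O (Set.range p))
    (t₂ : ℝ) (ht₂ : t₂ = t₁ + 2 * Real.sqrt (R ^ 2 - d ^ 2) / ‖V‖) :
    dist (p t₂) O = R := by
  have hVn : (0:ℝ) < ‖V‖ := norm_pos_iff.mpr hV
  have hC : (0:ℝ) < ‖V‖ ^ 2 := by positivity
  set q : EuclideanSpace ℝ (Fin 2) := P - O with hq
  set B : ℝ := ⟪q, V⟫ with hB
  set C : ℝ := ‖V‖ ^ 2 with hCdef
  -- distance squared formula
  have key : ∀ t : ℝ, dist (p t) O ^ 2 = ‖q‖ ^ 2 + 2 * t * B + t ^ 2 * C := by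
    intro t
    have hpt : p t - O = q + t • V := by rw [hp]; simp [hq]; abel
    rw [dist_eq_norm, hpt, norm_add_sq_real, real_inner_smul_right, norm_smul]
    simp only [Real.norm_eq_abs, mul_pow, sq_abs]
    ring
  -- inner product at t₁
  have hin' : B + t₁ * C ≤ 0 := by
    have h1 : O - p t₁ = -(q + t₁ • V) := by rw [hp]; simp [hq]; abel
    have h2 : ⟪V, O - p t₁⟫ = -(B + t₁ * C) := by
      rw [h1, inner_neg_right, inner_add_right, real_inner_smul_right,
        real_inner_self_eq_norm_sq, real_inner_comm]
    linarith [hin.le.trans_eq rfl, (h2 ▸ hin : -(B + t₁ * C) ≥ 0)]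
  -- the minimizing time
  set t₀ : ℝ := -B / C with ht₀
  have hd_eq : d = dist (p t₀) O := by
    rw [hd]
    apply le_antisymm
    · rw [dist_comm]
      exact Metric.infDist_le_dist_of_mem (Set.mem_range_self t₀)
    · by_contra hlt
      push_neg at hlt
      obtain ⟨y, ⟨t, rfl⟩, hy⟩ :=
        (Metric.infDist_lt_iff ⟨p t₀, Set.mem_range_self t₀⟩).mp hlt
      rw [dist_comm] at hy
      have k1 := key t
      have k2 := key t₀
      have hCne : C ≠ 0 := ne_of_gt hC
      have e : 2 * t₀ * B + t₀ ^ 2 * C = -B ^ 2 / C := by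
        rw [ht₀]; field_simp; ring
      have hsq : dist (p t₀) O ^ 2 ≤ dist (p t) O ^ 2 := by
        have h2 : -B ^ 2 / C ≤ 2 * t * B + t ^ 2 * C := by
          rw [div_le_iff₀ hC]
          nlinarith [sq_nonneg (C * t + B)]
        rw [k1, k2]
        linarith
      nlinarith [dist_nonneg (x := p t₀) (y := O), dist_nonneg (x := p t) (y := O)]

  have hCne : C ≠ 0 := ne_of_gt hC
  have hdsq : d ^ 2 = ‖q‖ ^ 2 - B ^ 2 / C := by
    rw [hd_eq, key t₀, ht₀]; field_simp; ring
  have hR2 : R ^ 2 = ‖q‖ ^ 2 + 2 * t₁ * B + t₁ ^ 2 * C := by rw [← h₁, key t₁]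
  have hsub : R ^ 2 - d ^ 2 = ((B + t₁ * C) / ‖V‖) ^ 2 := by
    rw [hdsq, hR2]
    field_simp [hCdef]
    ring
  have hsqrt : Real.sqrt (R ^ 2 - d ^ 2) = -(B + t₁ * C) / ‖V‖ := by
    rw [hsub, Real.sqrt_sq_eq_abs, abs_of_nonpos, neg_div]
    exact div_nonpos_of_nonpos_of_nonneg hin' hVn.le
  have ht₂' : t₂ = t₁ - 2 * (B + t₁ * C) / C := by
    rw [ht₂, hsqrt, hCdef]
    field_simp
    ring
  have hfin : dist (p t₂) O ^ 2 = R ^ 2 := by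
    rw [key t₂, ht₂', hR2]
    field_simp
    ring
  nlinarith [dist_nonneg (x := p t₂) (y := O)]
end

section
/- (Theorem, Case 1: shortest distances to two radars.) Let A, B ∈ EuclideanSpace ℝ (Fin 2) with A ≠ B, and let r₁, r₂ ≥ 0. Then the set of lines (one-dimensional affine subspaces ℓ of the plane) satisfying Metric.infDist A ℓ = r₁ and Metric.infDist B ℓ = r₂ is finite and has at most 4 elements. (Given the shortest distances of the bomber's straight trajectory to two distinct radars, there are at most 4 potential trajectories: the common tangent lines of the two circles.) -/
/-!
Write a line as `{x | ⟪n, x - p⟫ = 0}` with `‖n‖ = 1`; its distance to a point `P` is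
`|⟪n, P - p⟫|`. Orienting `n` towards `A`, a line at distance `r₁` from `A` is the line through
`A - r₁ • n` orthogonal to `n`, and its distance to `B` is `|r₁ - ⟪n, A - B⟫|`. Hence
`⟪n, A - B⟫ = r₁ ∓ r₂`, and for each sign the admissible `n` lie on the unit circle about `0` and
on a fixed circle about `A - B ≠ 0`: two distinct circles in the plane meet in at most two points.
-/

open scoped RealInnerProductSpace
open Module AffineSubspace

theorem Set.encard_le_two_of_forall_eq_or_eq {α : Type*} {s : Set α}
    (h : ∀ a ∈ s, ∀ b ∈ s, a ≠ b → ∀ c ∈ s, c = a ∨ c = b) : s.encard ≤ 2 := by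
  by_cases hs : s.Subsingleton
  · exact (Set.encard_le_one_iff_subsingleton.2 hs).trans (by norm_num)
  obtain ⟨a, ha, b, hb, hab⟩ := Set.not_subsingleton_iff.1 hs
  calc s.encard ≤ ({a, b} : Set α).encard := Set.encard_le_encard fun c hc => h a ha b hb hab c hc
    _ = 2 := Set.encard_pair hab

theorem AffineSubspace.nonempty_of_finrank_direction_ne_zero {k V P : Type*} [DivisionRing k]
    [AddCommGroup V] [Module k V] [AddTorsor V P] {s : AffineSubspace k P}
    (h : finrank k s.direction ≠ 0) : (s : Set P).Nonempty := by
  rw [Set.nonempty_iff_ne_empty, Ne, coe_eq_bot_iff]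
  rintro rfl
  exact h (by rw [direction_bot, finrank_bot])

section Hyperplane

variable {V : Type*} [NormedAddCommGroup V] [InnerProductSpace ℝ V]

theorem AffineSubspace.mem_mk'_orthogonal_span_singleton_iff {n p x : V} :
    x ∈ mk' p (ℝ ∙ n)ᗮ ↔ ⟪n, x - p⟫ = 0 := by
  rw [mem_mk', vsub_eq_sub, Submodule.mem_orthogonal_singleton_iff_inner_right]

theorem AffineSubspace.infDist_mk'_orthogonal_span_singleton {n : V} (hn : ‖n‖ = 1) (p P : V) :
    Metric.infDist P (mk' p (ℝ ∙ n)ᗮ : Set V) = |⟪n, P - p⟫| := by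
  have hnn : ⟪n, n⟫ = 1 := by rw [real_inner_self_eq_norm_sq, hn, one_pow]
  apply le_antisymm
  · have hfoot : P - ⟪n, P - p⟫ • n ∈ mk' p (ℝ ∙ n)ᗮ := by
      rw [mem_mk'_orthogonal_span_singleton_iff, sub_right_comm, inner_sub_right,
        real_inner_smul_right, hnn, mul_one, sub_self]
    calc Metric.infDist P (mk' p (ℝ ∙ n)ᗮ : Set V) ≤ dist P (P - ⟪n, P - p⟫ • n) :=
          Metric.infDist_le_dist_of_mem hfoot
      _ = |⟪n, P - p⟫| := by
          rw [dist_eq_norm, sub_sub_cancel, norm_smul, hn, mul_one, Real.norm_eq_abs]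
  · refine (Metric.le_infDist (mk'_nonempty _ _)).2 fun y hy => ?_
    rw [SetLike.mem_coe, mem_mk'_orthogonal_span_singleton_iff] at hy
    calc |⟪n, P - p⟫| = |⟪n, P - y⟫| := by
          rw [inner_sub_right] at hy ⊢; rw [inner_sub_right]; congr 1; linarith
      _ ≤ ‖n‖ * ‖P - y‖ := abs_real_inner_le_norm _ _
      _ = dist P y := by rw [hn, one_mul, dist_eq_norm]

theorem AffineSubspace.exists_norm_eq_one_direction_eq_orthogonal [FiniteDimensional ℝ V]
    {ℓ : AffineSubspace ℝ V} (hℓ : finrank ℝ ℓ.direction + 1 = finrank ℝ V) :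
    ∃ n : V, ‖n‖ = 1 ∧ ℓ.direction = (ℝ ∙ n)ᗮ := by
  have hperp : finrank ℝ ℓ.directionᗮ = 1 := by
    have := ℓ.direction.finrank_add_finrank_orthogonal; omega
  have : Nontrivial ℓ.directionᗮ := nontrivial_of_finrank_eq_succ hperp
  obtain ⟨n, hn⟩ := exists_norm_eq ℓ.directionᗮ zero_le_one
  have hspan : ℓ.directionᗮ = ℝ ∙ (n : V) :=
    eq_span_singleton_of_mem_of_finrank_eq_one hperp n.2
      (by rintro h; simp [h] at hn)
  exact ⟨n, hn, by rw [← hspan, Submodule.orthogonal_orthogonal]⟩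

noncomputable def tangentHyperplane (A : V) (r : ℝ) (n : V) : AffineSubspace ℝ V :=
  mk' (A - r • n) (ℝ ∙ n)ᗮ

theorem exists_eq_tangentHyperplane_of_infDist_eq [FiniteDimensional ℝ V]
    {ℓ : AffineSubspace ℝ V} (hne : (ℓ : Set V).Nonempty)
    (hℓ : finrank ℝ ℓ.direction + 1 = finrank ℝ V) {A : V} {r : ℝ} (hr : 0 ≤ r)
    (hA : Metric.infDist A ℓ = r) : ∃ n : V, ‖n‖ = 1 ∧ ℓ = tangentHyperplane A r n := by
  obtain ⟨p, hp⟩ := hne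
  obtain ⟨n, hn, hdir⟩ := exists_norm_eq_one_direction_eq_orthogonal hℓ
  have hℓp : ℓ = mk' p (ℝ ∙ n)ᗮ := by rw [← hdir, mk'_eq hp]
  rw [hℓp, infDist_mk'_orthogonal_span_singleton hn] at hA
  obtain ⟨m, hm, hspan, hmA⟩ : ∃ m : V, ‖m‖ = 1 ∧ (ℝ ∙ m) = (ℝ ∙ n) ∧ ⟪m, A - p⟫ = r := by
    rcases (abs_eq hr).1 hA with h | h
    · exact ⟨n, hn, rfl, h⟩
    · exact ⟨-n, by rwa [norm_neg], by rw [← Set.neg_singleton, Submodule.span_neg],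
        by rw [inner_neg_left, h, neg_neg]⟩
  have hfoot : A - r • m ∈ ℓ := by
    rw [hℓp, ← hspan, mem_mk'_orthogonal_span_singleton_iff, sub_right_comm, inner_sub_right,
      hmA, real_inner_smul_right, real_inner_self_eq_norm_sq, hm]
    ring
  refine ⟨m, hm, ?_⟩
  rw [tangentHyperplane, ← mk'_eq hfoot, hdir, hspan]

theorem mem_image_tangentHyperplane_of_infDist_eq [FiniteDimensional ℝ V]
    {ℓ : AffineSubspace ℝ V} (hne : (ℓ : Set V).Nonempty)
    (hℓ : finrank ℝ ℓ.direction + 1 = finrank ℝ V) {A B : V} {r₁ r₂ : ℝ} (hr₁ : 0 ≤ r₁)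
    (hr₂ : 0 ≤ r₂) (hA : Metric.infDist A ℓ = r₁) (hB : Metric.infDist B ℓ = r₂) :
    ℓ ∈ tangentHyperplane A r₁ ''
      ({n | ‖n‖ = 1 ∧ ⟪n, A - B⟫ = r₁ - r₂} ∪ {n | ‖n‖ = 1 ∧ ⟪n, A - B⟫ = r₁ + r₂}) := by
  obtain ⟨n, hn, rfl⟩ := exists_eq_tangentHyperplane_of_infDist_eq hne hℓ hr₁ hA
  rw [tangentHyperplane, infDist_mk'_orthogonal_span_singleton hn] at hB
  have hBn : ⟪n, B - (A - r₁ • n)⟫ = r₁ - ⟪n, A - B⟫ := by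
    rw [inner_sub_right, inner_sub_right, inner_sub_right, real_inner_smul_right,
      real_inner_self_eq_norm_sq, hn]
    ring
  refine ⟨n, ?_, rfl⟩
  rcases (abs_eq hr₂).1 hB with h | h
  · exact Or.inl ⟨hn, by linarith⟩
  · exact Or.inr ⟨hn, by linarith⟩

theorem encard_setOf_norm_eq_one_inner_eq_le_two [FiniteDimensional ℝ V]
    (hV : finrank ℝ V = 2) {u : V} (hu : u ≠ 0) (d : ℝ) :
    {n : V | ‖n‖ = 1 ∧ ⟪n, u⟫ = d}.encard ≤ 2 := by
  have hdist : ∀ n : V, ‖n‖ = 1 → ⟪n, u⟫ = d → dist n u = √(1 - 2 * d + ‖u‖ ^ 2) := by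
    intro n hn hd
    rw [dist_eq_norm, ← Real.sqrt_sq (norm_nonneg _), norm_sub_sq_real, hn, hd]
    ring_nf
  refine Set.encard_le_two_of_forall_eq_or_eq ?_
  rintro a ⟨ha, had⟩ b ⟨hb, hbd⟩ hab c ⟨hc, hcd⟩
  exact EuclideanGeometry.eq_of_dist_eq_of_dist_eq_of_finrank_eq_two hV hu.symm hab
    (by simpa using ha) (by simpa using hb) (by simpa using hc)
    (hdist a ha had) (hdist b hb hbd) (hdist c hc hcd)

end Hyperplane

/-- Case 1: given the shortest distances `r₁`, `r₂` of a straight trajectory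
to two distinct radars `A`, `B`, there are at most 4 potential trajectories:
the set of lines at distance `r₁` from `A` and `r₂` from `B` is finite with at
most 4 elements. -/
theorem lines_at_given_distances_finite (A B : EuclideanSpace ℝ (Fin 2)) (hAB : A ≠ B)
    (r₁ r₂ : ℝ) (hr₁ : 0 ≤ r₁) (hr₂ : 0 ≤ r₂) :
    {ℓ : AffineSubspace ℝ (EuclideanSpace ℝ (Fin 2)) |
        Module.finrank ℝ ℓ.direction = 1 ∧
        Metric.infDist A (ℓ : Set (EuclideanSpace ℝ (Fin 2))) = r₁ ∧
        Metric.infDist B (ℓ : Set (EuclideanSpace ℝ (Fin 2))) = r₂}.Finite ∧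
    {ℓ : AffineSubspace ℝ (EuclideanSpace ℝ (Fin 2)) |
        Module.finrank ℝ ℓ.direction = 1 ∧
        Metric.infDist A (ℓ : Set (EuclideanSpace ℝ (Fin 2))) = r₁ ∧
        Metric.infDist B (ℓ : Set (EuclideanSpace ℝ (Fin 2))) = r₂}.ncard ≤ 4 := by
  rw [← Set.encard_le_coe_iff_finite_ncard_le]
  have hV : finrank ℝ (EuclideanSpace ℝ (Fin 2)) = 2 := finrank_euclideanSpace_fin
  have hT (d : ℝ) : {n : EuclideanSpace ℝ (Fin 2) | ‖n‖ = 1 ∧ ⟪n, A - B⟫ = d}.encard ≤ 2 :=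
    encard_setOf_norm_eq_one_inner_eq_le_two hV (sub_ne_zero.2 hAB) d
  calc _ ≤ (tangentHyperplane A r₁ '' ({n | ‖n‖ = 1 ∧ ⟪n, A - B⟫ = r₁ - r₂} ∪
          {n | ‖n‖ = 1 ∧ ⟪n, A - B⟫ = r₁ + r₂})).encard :=
        Set.encard_le_encard <| by
          rintro ℓ ⟨hdim, hA, hB⟩
          exact mem_image_tangentHyperplane_of_infDist_eq
            (nonempty_of_finrank_direction_ne_zero (by rw [hdim]; exact one_ne_zero))
            (by rw [hdim, hV]) hr₁ hr₂ hA hB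
    _ ≤ _ := Set.encard_image_le _ _
    _ ≤ _ := Set.encard_union_le _ _
    _ ≤ 2 + 2 := add_le_add (hT _) (hT _)
    _ = 4 := by norm_num
end

section
/- (Case 1, exact count for disjoint circles.) Let A, B ∈ EuclideanSpace ℝ (Fin 2) and r₁ > 0, r₂ > 0 with dist A B > r₁ + r₂. Then the set of lines (one-dimensional affine subspaces ℓ of the plane) satisfying Metric.infDist A ℓ = r₁ and Metric.infDist B ℓ = r₂ has exactly 4 elements (two external and two internal common tangents). -/
/-!
Write every line of the plane as `{x | ⟪n, x⟫ = c}` with a unit normal `n`, made unique by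
requiring `n` to lie in a fixed closed half-plane. The signed distances `s₁ = ⟪n, A⟫ - c` and
`s₂ = ⟪n, B⟫ - c` then determine the line: `⟪n, B - A⟫ = s₂ - s₁` fixes the component of `n`
along `B - A`, hence `n`, and then `c`. Conversely every pair `(s₁, s₂)` with
`|s₂ - s₁| < dist A B` arises. The common tangents thus correspond bijectively to the four
sign choices `s₁ = ±r₁`, `s₂ = ±r₂`, all admissible since `|s₂ - s₁| ≤ r₁ + r₂ < dist A B`.
-/

open scoped RealInnerProductSpace
open Module Set

variable {E : Type*} [NormedAddCommGroup E] [InnerProductSpace ℝ E]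

/-- This is `{x | ⟪n, x⟫ = c}` only for unit `n`, see `mem_hyperplane`. -/
noncomputable def hyperplane (n : E) (c : ℝ) : AffineSubspace ℝ E :=
  AffineSubspace.mk' (c • n) (ℝ ∙ n)ᗮ

lemma mem_hyperplane {n x : E} {c : ℝ} (hn : ‖n‖ = 1) : x ∈ hyperplane n c ↔ ⟪n, x⟫ = c := by
  rw [hyperplane, AffineSubspace.mem_mk', vsub_eq_sub,
    Submodule.mem_orthogonal_singleton_iff_inner_right, inner_sub_right, real_inner_smul_right,
    real_inner_self_eq_norm_sq, hn, one_pow, mul_one, sub_eq_zero]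

lemma hyperplane_neg (n : E) (c : ℝ) : hyperplane (-n) (-c) = hyperplane n c := by
  rw [hyperplane, hyperplane, neg_smul_neg, ← Set.neg_singleton, Submodule.span_neg]

lemma finrank_direction_hyperplane [FiniteDimensional ℝ E] {n : E} (hn : n ≠ 0) (c : ℝ) :
    finrank ℝ (hyperplane n c).direction + 1 = finrank ℝ E := by
  rw [hyperplane, AffineSubspace.direction_mk', ← finrank_span_singleton (K := ℝ) hn, add_comm]
  exact Submodule.finrank_add_finrank_orthogonal _

lemma infDist_hyperplane {n : E} (hn : ‖n‖ = 1) (c : ℝ) (p : E) :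
    Metric.infDist p (hyperplane n c : Set E) = |⟪n, p⟫ - c| := by
  have hfoot : p - (⟪n, p⟫ - c) • n ∈ hyperplane n c := by
    rw [mem_hyperplane hn, inner_sub_right, real_inner_smul_right, real_inner_self_eq_norm_sq, hn]
    ring
  refine le_antisymm ?_ ((Metric.le_infDist ⟨_, hfoot⟩).2 fun y hy => ?_)
  · calc _ ≤ dist p (p - (⟪n, p⟫ - c) • n) := Metric.infDist_le_dist_of_mem hfoot
      _ = _ := by rw [dist_eq_norm, sub_sub_cancel, norm_smul, hn, mul_one, Real.norm_eq_abs]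
  · rw [SetLike.mem_coe, mem_hyperplane hn] at hy
    calc |⟪n, p⟫ - c| = |⟪n, p - y⟫| := by rw [inner_sub_right, hy]
      _ ≤ ‖n‖ * ‖p - y‖ := abs_real_inner_le_norm n (p - y)
      _ = dist p y := by rw [hn, one_mul, dist_eq_norm]

lemma hyperplane_eq_hyperplane_iff {n n' : E} {c c' : ℝ} (hn : ‖n‖ = 1) (hn' : ‖n'‖ = 1) :
    hyperplane n c = hyperplane n' c' ↔ (n' = n ∧ c' = c) ∨ (n' = -n ∧ c' = -c) := by
  refine ⟨fun h => ?_, ?_⟩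
  · have hperp : (ℝ ∙ n)ᗮ = (ℝ ∙ n')ᗮ := by
      simpa only [hyperplane, AffineSubspace.direction_mk'] using
        congrArg AffineSubspace.direction h
    obtain ⟨z, rfl⟩ : ∃ z : ℝ, z • n = n' := by
      rw [← Submodule.mem_span_singleton, ← Submodule.orthogonal_orthogonal (ℝ ∙ n), hperp,
        Submodule.orthogonal_orthogonal]
      exact Submodule.mem_span_singleton_self n'
    have hz : |z| = 1 := by rwa [norm_smul, hn, mul_one, Real.norm_eq_abs] at hn'
    have hc : z * c' = c := by
      have hmem : c' • z • n ∈ hyperplane n c := by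
        rw [h, mem_hyperplane hn', real_inner_smul_right, real_inner_self_eq_norm_sq, hn']
        ring
      rwa [mem_hyperplane hn, real_inner_smul_right, real_inner_smul_right,
        real_inner_self_eq_norm_sq, hn, one_pow, mul_one, mul_comm] at hmem
    rcases abs_eq zero_le_one |>.1 hz with rfl | rfl
    · exact Or.inl ⟨one_smul ℝ n, by linarith⟩
    · exact Or.inr ⟨neg_one_smul ℝ n, by linarith⟩
  · rintro (⟨rfl, rfl⟩ | ⟨rfl, rfl⟩)
    · rfl
    · exact (hyperplane_neg n c).symm

lemma exists_hyperplane_eq [FiniteDimensional ℝ E] {ℓ : AffineSubspace ℝ E} {p : E} (hp : p ∈ ℓ)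
    (hℓ : finrank ℝ ℓ.direction + 1 = finrank ℝ E) :
    ∃ n, ‖n‖ = 1 ∧ ℓ = hyperplane n ⟪n, p⟫ := by
  have hrank : finrank ℝ ℓ.directionᗮ = 1 := by
    have := ℓ.direction.finrank_add_finrank_orthogonal
    omega
  obtain ⟨m, hm, hm0⟩ := Submodule.exists_mem_ne_zero_of_ne_bot
    (Submodule.one_le_finrank_iff.1 hrank.ge)
  set n := ‖m‖⁻¹ • m
  have hn : ‖n‖ = 1 := norm_smul_inv_norm hm0
  have hspan : ℝ ∙ n = ℓ.directionᗮ :=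
    Submodule.eq_of_le_of_finrank_eq
      ((Submodule.span_singleton_le_iff_mem _ _).2 (Submodule.smul_mem _ _ hm))
      (by rw [hrank, finrank_span_singleton (norm_ne_zero_iff.1 (hn.trans_ne one_ne_zero))])
  refine ⟨n, hn, AffineSubspace.ext fun x => ?_⟩
  rw [mem_hyperplane hn, ← AffineSubspace.vsub_right_mem_direction_iff_mem hp,
    ← ℓ.direction.orthogonal_orthogonal, ← hspan, vsub_eq_sub,
    Submodule.mem_orthogonal_singleton_iff_inner_right, inner_sub_right, sub_eq_zero]

lemma exists_orthonormalBasis_apply_eq [FiniteDimensional ℝ E] {ι : Type*} [Fintype ι]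
    (hcard : finrank ℝ E = Fintype.card ι) (i : ι) {u : E} (hu : ‖u‖ = 1) :
    ∃ b : OrthonormalBasis ι ℝ E, b i = u := by
  obtain ⟨b, hb⟩ := Orthonormal.exists_orthonormalBasis_extension_of_card_eq hcard
    (v := fun _ => u) (s := {i}) (by
      rw [orthonormal_iff_ite]
      rintro ⟨j, rfl⟩ ⟨k, rfl⟩
      simp [hu])
  exact ⟨b, hb i rfl⟩

lemma OrthonormalBasis.finrank_eq_two (b : OrthonormalBasis (Fin 2) ℝ E) : finrank ℝ E = 2 := by
  simpa using finrank_eq_card_basis b.toBasis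

section Plane

variable (b : OrthonormalBasis (Fin 2) ℝ E)

noncomputable def upperUnitVec (τ : ℝ) : E := τ • b 0 + √(1 - τ ^ 2) • b 1

lemma inner_upperUnitVec_zero (τ : ℝ) : ⟪b 0, upperUnitVec b τ⟫ = τ := by
  simp [upperUnitVec, inner_add_right, real_inner_smul_right, b.inner_eq_zero]

lemma inner_upperUnitVec_one (τ : ℝ) : ⟪b 1, upperUnitVec b τ⟫ = √(1 - τ ^ 2) := by
  simp [upperUnitVec, inner_add_right, real_inner_smul_right, b.inner_eq_zero]

lemma norm_upperUnitVec {τ : ℝ} (hτ : |τ| ≤ 1) : ‖upperUnitVec b τ‖ = 1 := by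
  have h := b.sum_sq_inner_right (upperUnitVec b τ)
  rw [Fin.sum_univ_two, inner_upperUnitVec_zero, inner_upperUnitVec_one,
    Real.sq_sqrt (sub_nonneg.2 ((sq_le_one_iff_abs_le_one τ).2 hτ)), add_sub_cancel] at h
  exact (pow_eq_one_iff_of_nonneg (norm_nonneg _) two_ne_zero).1 h.symm

lemma upperUnitVec_inner_zero {n : E} (hn : ‖n‖ = 1) (h : 0 ≤ ⟪b 1, n⟫) :
    upperUnitVec b ⟪b 0, n⟫ = n := by
  have hsq := b.sum_sq_inner_right n
  rw [Fin.sum_univ_two, hn, one_pow] at hsq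
  have hsqrt : √(1 - ⟪b 0, n⟫ ^ 2) = ⟪b 1, n⟫ := by
    rw [← Real.sqrt_sq h]
    congr 1
    linarith
  conv_rhs => rw [← b.sum_repr' n, Fin.sum_univ_two]
  rw [upperUnitVec, hsqrt]

lemma eq_and_eq_of_hyperplane_upperUnitVec_eq {τ τ' c c' : ℝ} (hτ : |τ| < 1) (hτ' : |τ'| < 1)
    (h : hyperplane (upperUnitVec b τ) c = hyperplane (upperUnitVec b τ') c') :
    τ = τ' ∧ c = c' := by
  rcases (hyperplane_eq_hyperplane_iff (norm_upperUnitVec b hτ.le)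
    (norm_upperUnitVec b hτ'.le)).1 h with ⟨hn, hc⟩ | ⟨hn, -⟩
  · refine ⟨?_, hc.symm⟩
    simpa only [inner_upperUnitVec_zero] using congrArg (⟪b 0, ·⟫) hn.symm
  · have hpos : ∀ {σ : ℝ}, |σ| < 1 → 0 < √(1 - σ ^ 2) := fun hσ =>
      Real.sqrt_pos.2 (sub_pos.2 ((sq_lt_one_iff_abs_lt_one _).2 hσ))
    have := congrArg (⟪b 1, ·⟫) hn
    simp only [inner_neg_right, inner_upperUnitVec_one] at this
    linarith [hpos hτ, hpos hτ']

lemma exists_hyperplane_eq_of_finrank_eq_one [FiniteDimensional ℝ E] {ℓ : AffineSubspace ℝ E}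
    (hℓ : finrank ℝ ℓ.direction = 1) :
    ∃ n c, ‖n‖ = 1 ∧ 0 ≤ ⟪b 1, n⟫ ∧ ℓ = hyperplane n c := by
  obtain ⟨p, hp⟩ : (ℓ : Set E).Nonempty := by
    rw [AffineSubspace.nonempty_iff_ne_bot]
    rintro rfl
    rw [AffineSubspace.direction_bot, finrank_bot] at hℓ
    exact zero_ne_one hℓ
  obtain ⟨n, hn, rfl⟩ := exists_hyperplane_eq hp (by rw [hℓ, b.finrank_eq_two])
  rcases le_total 0 ⟪b 1, n⟫ with h | h
  · exact ⟨n, _, hn, h, rfl⟩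
  · exact ⟨-n, -⟪n, p⟫, by rwa [norm_neg], by rwa [inner_neg_right, neg_nonneg],
      (hyperplane_neg n _).symm⟩

/-- The line at signed distances `s.1` from `A` and `s.2` from `A + d • b 0`. -/
noncomputable def tangentLine (A : E) (d : ℝ) (s : ℝ × ℝ) : AffineSubspace ℝ E :=
  hyperplane (upperUnitVec b ((s.2 - s.1) / d)) (⟪upperUnitVec b ((s.2 - s.1) / d), A⟫ - s.1)

variable {b}

lemma finrank_direction_tangentLine [FiniteDimensional ℝ E] {A : E} {d : ℝ} {s : ℝ × ℝ}
    (hs : |(s.2 - s.1) / d| ≤ 1) : finrank ℝ (tangentLine b A d s).direction = 1 := by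
  have := finrank_direction_hyperplane (ne_zero_of_norm_ne_zero
    ((norm_upperUnitVec b hs).trans_ne one_ne_zero)) (⟪upperUnitVec b ((s.2 - s.1) / d), A⟫ - s.1)
  rw [b.finrank_eq_two] at this
  exact Nat.succ_injective this

lemma infDist_tangentLine {A : E} {d : ℝ} (hd : d ≠ 0) {s : ℝ × ℝ} (hs : |(s.2 - s.1) / d| ≤ 1) :
    Metric.infDist A (tangentLine b A d s) = |s.1| ∧
      Metric.infDist (A + d • b 0) (tangentLine b A d s) = |s.2| := by
  have hn := norm_upperUnitVec b hs
  rw [tangentLine, infDist_hyperplane hn, infDist_hyperplane hn, inner_add_right,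
    real_inner_smul_right, real_inner_comm (b 0), inner_upperUnitVec_zero, mul_div_cancel₀ _ hd]
  constructor <;> congr 1 <;> ring

lemma hyperplane_eq_tangentLine (A : E) {d : ℝ} (hd : d ≠ 0) {n : E} (c : ℝ) (hn : ‖n‖ = 1)
    (h : 0 ≤ ⟪b 1, n⟫) :
    hyperplane n c = tangentLine b A d (⟪n, A⟫ - c, ⟪n, A + d • b 0⟫ - c) := by
  have hτ : (⟪n, A + d • b 0⟫ - c - (⟪n, A⟫ - c)) / d = ⟪b 0, n⟫ := by
    rw [inner_add_right, real_inner_smul_right, real_inner_comm (b 0)]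
    field_simp
    ring
  rw [tangentLine, hτ, upperUnitVec_inner_zero b hn h, sub_sub_cancel]

lemma tangentLine_injOn {A : E} {d : ℝ} (hd : d ≠ 0) :
    InjOn (tangentLine b A d) {s | |(s.2 - s.1) / d| < 1} := by
  intro s hs s' hs' h
  obtain ⟨hτ, hc⟩ := eq_and_eq_of_hyperplane_upperUnitVec_eq b hs hs' h
  rw [hτ] at hc
  rw [div_left_inj' hd] at hτ
  exact Prod.ext (by linarith) (by linarith)

end Plane

lemma abs_sub_div_lt_one {s₁ s₂ r₁ r₂ d : ℝ} (hd : 0 < d) (hsep : r₁ + r₂ < d)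
    (h₁ : |s₁| = r₁) (h₂ : |s₂| = r₂) : |(s₂ - s₁) / d| < 1 := by
  rw [abs_div, abs_of_pos hd, div_lt_one hd]
  calc |s₂ - s₁| ≤ |s₂| + |s₁| := abs_sub _ _
    _ < d := by linarith

lemma setOf_infDist_eq_eq_image [FiniteDimensional ℝ E] (b : OrthonormalBasis (Fin 2) ℝ E)
    {A : E} {d r₁ r₂ : ℝ} (hd : 0 < d) (hsep : r₁ + r₂ < d) :
    {ℓ : AffineSubspace ℝ E | finrank ℝ ℓ.direction = 1 ∧ Metric.infDist A ℓ = r₁ ∧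
        Metric.infDist (A + d • b 0) ℓ = r₂} =
      tangentLine b A d '' {x | |x| = r₁} ×ˢ {x | |x| = r₂} := by
  ext ℓ
  constructor
  · rintro ⟨hℓ, hA, hB⟩
    obtain ⟨n, c, hn, hb, rfl⟩ := exists_hyperplane_eq_of_finrank_eq_one b hℓ
    rw [infDist_hyperplane hn] at hA hB
    exact ⟨(⟪n, A⟫ - c, ⟪n, A + d • b 0⟫ - c), ⟨hA, hB⟩,
      (hyperplane_eq_tangentLine A hd.ne' c hn hb).symm⟩
  · rintro ⟨s, ⟨h₁, h₂⟩, rfl⟩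
    have hs := (abs_sub_div_lt_one hd hsep h₁ h₂).le
    obtain ⟨hA, hB⟩ := infDist_tangentLine (b := b) hd.ne' hs
    exact ⟨finrank_direction_tangentLine hs, hA.trans h₁, hB.trans h₂⟩

lemma setOf_abs_eq {r : ℝ} (hr : 0 ≤ r) : {x : ℝ | |x| = r} = {r, -r} := by
  ext x
  simp [abs_eq hr]

/-- Case 1, exact count: for two disjoint circles (centers `A ≠ B` with
`dist A B > r₁ + r₂`, radii `r₁, r₂ > 0`) there are exactly 4 common tangent
lines, i.e. 4 lines at distance `r₁` from `A` and `r₂` from `B`. -/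
theorem four_common_tangents (A B : EuclideanSpace ℝ (Fin 2))
    (r₁ r₂ : ℝ) (hr₁ : 0 < r₁) (hr₂ : 0 < r₂) (hsep : dist A B > r₁ + r₂) :
    {ℓ : AffineSubspace ℝ (EuclideanSpace ℝ (Fin 2)) |
        Module.finrank ℝ ℓ.direction = 1 ∧
        Metric.infDist A (ℓ : Set (EuclideanSpace ℝ (Fin 2))) = r₁ ∧
        Metric.infDist B (ℓ : Set (EuclideanSpace ℝ (Fin 2))) = r₂}.Finite ∧
    {ℓ : AffineSubspace ℝ (EuclideanSpace ℝ (Fin 2)) |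
        Module.finrank ℝ ℓ.direction = 1 ∧
        Metric.infDist A (ℓ : Set (EuclideanSpace ℝ (Fin 2))) = r₁ ∧
        Metric.infDist B (ℓ : Set (EuclideanSpace ℝ (Fin 2))) = r₂}.ncard = 4 := by
  rw [dist_comm, dist_eq_norm] at hsep
  generalize hdef : ‖B - A‖ = d at hsep
  have hd : 0 < d := by linarith
  obtain ⟨b, hb⟩ := exists_orthonormalBasis_apply_eq (by simp) (0 : Fin 2) (u := d⁻¹ • (B - A))
    (by rw [norm_smul, norm_inv, Real.norm_of_nonneg hd.le, hdef, inv_mul_cancel₀ hd.ne'])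
  obtain rfl : B = A + d • b 0 := by rw [hb, smul_inv_smul₀ hd.ne', add_sub_cancel]
  have hinj := (tangentLine_injOn (b := b) (A := A) hd.ne').mono
    fun s (hs : s ∈ {x | |x| = r₁} ×ˢ {x | |x| = r₂}) => abs_sub_div_lt_one hd hsep hs.1 hs.2
  rw [setOf_infDist_eq_eq_image b hd hsep, hinj.ncard_image, Set.ncard_prod,
    setOf_abs_eq hr₁.le, setOf_abs_eq hr₂.le, Set.ncard_pair (by linarith),
    Set.ncard_pair (by linarith)]
  exact ⟨(Set.toFinite _).image _, rfl⟩
end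

section
/- (Case 1, translation reduction.) Let ℓ be a line (one-dimensional affine subspace) in EuclideanSpace ℝ (Fin 2), and let A, B be points. Let ℓ_A be the line through A parallel to ℓ (the translate of ℓ whose direction equals the direction of ℓ and which contains A). Then Metric.infDist B ℓ_A = Metric.infDist A ℓ + Metric.infDist B ℓ, or Metric.infDist B ℓ_A = |Metric.infDist B ℓ - Metric.infDist A ℓ|. (Translating a common tangent of two circles so that it passes through the first center yields a tangent line from that center to a circle around the second center of radius equal to the sum or the difference of the radii.) -/
open RealInnerProductSpace

private lemma infDist_hyperplane_s5 (s : AffineSubspace ℝ (EuclideanSpace ℝ (Fin 2)))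
    (p₀ : EuclideanSpace ℝ (Fin 2)) (hp₀ : p₀ ∈ s) (n : EuclideanSpace ℝ (Fin 2))
    (hn : ‖n‖ = 1) (hdir : s.direction = (ℝ ∙ n)ᗮ)
    (P : EuclideanSpace ℝ (Fin 2)) :
    Metric.infDist P (s : Set (EuclideanSpace ℝ (Fin 2))) = |⟪P - p₀, n⟫| := by
  have hne : (s : Set (EuclideanSpace ℝ (Fin 2))).Nonempty := ⟨p₀, hp₀⟩
  apply le_antisymm
  · -- the point P - ⟪P - p₀, n⟫ • n lies in s
    set c : ℝ := ⟪P - p₀, n⟫ with hc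
    have hmem : ((P - p₀ - c • n) +ᵥ p₀) ∈ s := by
      apply AffineSubspace.vadd_mem_of_mem_direction _ hp₀
      rw [hdir, Submodule.mem_orthogonal_singleton_iff_inner_right]
      rw [inner_sub_right, real_inner_smul_right, real_inner_comm,
        real_inner_self_eq_norm_sq, hn]
      ring
    have := Metric.infDist_le_dist_of_mem (x := P) hmem
    refine this.trans_eq ?_
    have : P - ((P - p₀ - c • n) +ᵥ p₀) = c • n := by
      simp [vadd_eq_add]; abel
    rw [dist_eq_norm, this, norm_smul, hn, mul_one, Real.norm_eq_abs]
  · by_contra hlt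
    push_neg at hlt
    obtain ⟨q, hq, hdq⟩ := (Metric.infDist_lt_iff hne).mp hlt
    have hqd : q - p₀ ∈ s.direction := by
      have := AffineSubspace.vsub_mem_direction hq hp₀
      simpa [vsub_eq_sub] using this
    rw [hdir, Submodule.mem_orthogonal_singleton_iff_inner_right] at hqd
    have : ⟪P - p₀, n⟫ = ⟪P - q, n⟫ := by
      have h1 : P - p₀ = (P - q) + (q - p₀) := by abel
      rw [h1, inner_add_left, real_inner_comm n (q - p₀), hqd, add_zero]
    rw [dist_eq_norm] at hdq
    have hcs : |⟪P - q, n⟫| ≤ ‖P - q‖ := by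
      calc |⟪P - q, n⟫| ≤ ‖P - q‖ * ‖n‖ := abs_real_inner_le_norm _ _
        _ = ‖P - q‖ := by rw [hn, mul_one]
    rw [this] at hdq
    linarith

private lemma abs_cases_aux (a b : ℝ) :
    |b - a| = |a| + |b| ∨ |b - a| = |b| - |a| ∨ |b - a| = -(|b| - |a|) := by
  rcases abs_cases a with ⟨ha1, ha2⟩ | ⟨ha1, ha2⟩ <;>
    rcases abs_cases b with ⟨hb1, hb2⟩ | ⟨hb1, hb2⟩ <;>
    rcases abs_cases (b - a) with ⟨h1, h2⟩ | ⟨h1, h2⟩ <;>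
    first
      | (left; linarith)
      | (right; left; linarith)
      | (right; right; linarith)

/-- Case 1, translation reduction: if `ℓ_A` is the line through `A` parallel
to the line `ℓ`, then the distance from `B` to `ℓ_A` is either the sum or the
absolute difference of the distances from `A` and from `B` to `ℓ`. -/
theorem infDist_parallel_translate (ℓ ℓA : AffineSubspace ℝ (EuclideanSpace ℝ (Fin 2)))
    (hℓ : Module.finrank ℝ ℓ.direction = 1)
    (A B : EuclideanSpace ℝ (Fin 2))
    (hA : A ∈ ℓA) (hdir : ℓA.direction = ℓ.direction) :
    Metric.infDist B (ℓA : Set (EuclideanSpace ℝ (Fin 2))) =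
        Metric.infDist A (ℓ : Set (EuclideanSpace ℝ (Fin 2))) +
          Metric.infDist B (ℓ : Set (EuclideanSpace ℝ (Fin 2))) ∨
      Metric.infDist B (ℓA : Set (EuclideanSpace ℝ (Fin 2))) =
        |Metric.infDist B (ℓ : Set (EuclideanSpace ℝ (Fin 2))) -
          Metric.infDist A (ℓ : Set (EuclideanSpace ℝ (Fin 2)))| := by
  classical
  -- ℓ is nonempty
  have hℓne : (ℓ : Set (EuclideanSpace ℝ (Fin 2))).Nonempty := by
    rcases Set.eq_empty_or_nonempty (ℓ : Set (EuclideanSpace ℝ (Fin 2))) with h | h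
    · exfalso
      have : ℓ = ⊥ := (AffineSubspace.coe_eq_bot_iff ℓ).mp h
      rw [this, AffineSubspace.direction_bot] at hℓ
      simp at hℓ
    · exact h
  obtain ⟨p₀, hp₀⟩ := hℓne
  -- find a unit normal vector
  have horth : Module.finrank ℝ (ℓ.direction)ᗮ = 1 := by
    have := Submodule.finrank_add_finrank_orthogonal (K := ℓ.direction)
    have h2 : Module.finrank ℝ (EuclideanSpace ℝ (Fin 2)) = 2 := by
      simp [finrank_euclideanSpace]
    omega
  obtain ⟨v, hv0, hv⟩ := finrank_eq_one_iff'.mp horth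
  have hvne : (v : EuclideanSpace ℝ (Fin 2)) ≠ 0 := by
    simpa using hv0
  have hspan : (ℝ ∙ (v : EuclideanSpace ℝ (Fin 2))) = (ℓ.direction)ᗮ := by
    apply Submodule.eq_of_le_of_finrank_le
    · rw [Submodule.span_singleton_le_iff_mem]; exact v.2
    · rw [horth, finrank_span_singleton hvne]
  set n : EuclideanSpace ℝ (Fin 2) := ‖(v : EuclideanSpace ℝ (Fin 2))‖⁻¹ • v with hn
  have hnnorm : ‖n‖ = 1 := by
    rw [hn, norm_smul, norm_inv, norm_norm, inv_mul_cancel₀ (norm_ne_zero_iff.mpr hvne)]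
  have hspan' : (ℝ ∙ n) = (ℓ.direction)ᗮ := by
    rw [hn, Submodule.span_singleton_smul_eq, hspan]
    exact (isUnit_iff_ne_zero.mpr (inv_ne_zero (norm_ne_zero_iff.mpr hvne)))
  have hdir' : ℓ.direction = (ℝ ∙ n)ᗮ := by
    rw [hspan', Submodule.orthogonal_orthogonal]
  have h1 := infDist_hyperplane_s5 ℓ p₀ hp₀ n hnnorm hdir' A
  have h2 := infDist_hyperplane_s5 ℓ p₀ hp₀ n hnnorm hdir' B
  have h3 := infDist_hyperplane_s5 ℓA A hA n hnnorm (hdir.trans hdir') B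
  rw [h1, h2, h3]
  set a : ℝ := ⟪A - p₀, n⟫
  set b : ℝ := ⟪B - p₀, n⟫
  have hBA : ⟪B - A, n⟫ = b - a := by
    have : B - A = (B - p₀) - (A - p₀) := by abel
    rw [this, inner_sub_left]
  rw [hBA]
  rcases abs_cases_aux a b with h | h | h
  · left; exact h
  · right
    have h0 : (0:ℝ) ≤ |b| - |a| := h ▸ abs_nonneg (b - a)
    rw [h, abs_of_nonneg h0]
  · right
    have h0 : |b| - |a| ≤ (0:ℝ) := by
      have := h ▸ abs_nonneg (b - a); linarith
    rw [h, abs_of_nonpos h0]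
end

section
/- (Case 1, converse construction of tangent lines.) Let A, B ∈ EuclideanSpace ℝ (Fin 2), r₁, r₂ ≥ 0, and let m be a line (one-dimensional affine subspace) with A ∈ m. If Metric.infDist B m = |r₂ - r₁| or Metric.infDist B m = r₁ + r₂, then there exists a line ℓ parallel to m (having the same direction as m) such that Metric.infDist A ℓ = r₁ and Metric.infDist B ℓ = r₂. (A tangent line from A to the circle around B of radius |r₂ - r₁| or r₁ + r₂ can be translated perpendicular to itself at distance r₁ to produce a common tangent of the circles of radii r₁ and r₂ around A and B.) -/
open Metric RealInnerProductSpace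

lemma infDist_eq_of_orthogonal {E : Type*} [NormedAddCommGroup E] [InnerProductSpace ℝ E]
    (ℓ : AffineSubspace ℝ E) (P q : E) (hq : q ∈ ℓ)
    (h : ∀ v ∈ ℓ.direction, ⟪P - q, v⟫ = (0:ℝ)) :
    Metric.infDist P (ℓ : Set E) = dist P q := by
  refine le_antisymm (Metric.infDist_le_dist_of_mem hq) ?_
  by_contra hlt
  push_neg at hlt
  obtain ⟨y, hy, hdy⟩ := (Metric.infDist_lt_iff ⟨q, hq⟩).1 hlt
  have horth : ⟪P - q, q - y⟫ = (0:ℝ) := by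
    have : q - y ∈ ℓ.direction := by
      simpa using AffineSubspace.vsub_mem_direction hq hy
    exact h _ this
  have hpy : (dist P q)^2 ≤ (dist P y)^2 := by
    have : P - y = (P - q) + (q - y) := by abel
    rw [dist_eq_norm, dist_eq_norm, this, norm_add_sq_real, horth]
    nlinarith [sq_nonneg ‖q - y‖]
  have := le_of_pow_le_pow_left₀ two_ne_zero dist_nonneg hpy
  linarith

/-- Case 1, converse construction: a line `m` through `A` at distance
`|r₂ - r₁|` or `r₁ + r₂` from `B` can be translated parallel to itself to a
common tangent line `ℓ` of the circles of radii `r₁`, `r₂` around `A`, `B`. -/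
theorem common_tangent_from_tangent_through_center
    (A B : EuclideanSpace ℝ (Fin 2)) (r₁ r₂ : ℝ) (hr₁ : 0 ≤ r₁) (hr₂ : 0 ≤ r₂)
    (m : AffineSubspace ℝ (EuclideanSpace ℝ (Fin 2)))
    (hm : Module.finrank ℝ m.direction = 1) (hAm : A ∈ m)
    (hB : Metric.infDist B (m : Set (EuclideanSpace ℝ (Fin 2))) = |r₂ - r₁| ∨
      Metric.infDist B (m : Set (EuclideanSpace ℝ (Fin 2))) = r₁ + r₂) :
    ∃ ℓ : AffineSubspace ℝ (EuclideanSpace ℝ (Fin 2)),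
      (ℓ : Set (EuclideanSpace ℝ (Fin 2))).Nonempty ∧
      ℓ.direction = m.direction ∧
      Metric.infDist A (ℓ : Set (EuclideanSpace ℝ (Fin 2))) = r₁ ∧
      Metric.infDist B (ℓ : Set (EuclideanSpace ℝ (Fin 2))) = r₂ := by
  set D := m.direction with hD
  have hdim : Module.finrank ℝ (EuclideanSpace ℝ (Fin 2)) = 2 := by
    simp [finrank_euclideanSpace]
  have hDp : Module.finrank ℝ Dᗮ = 1 := by
    have h1 := Submodule.finrank_add_finrank_orthogonal (K := D)
    rw [hdim] at h1; omega
  obtain ⟨u₀, hu₀D, hu₀⟩ : ∃ u₀ ∈ Dᗮ, u₀ ≠ 0 := by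
    by_contra hcon
    push_neg at hcon
    have : Dᗮ = ⊥ := by
      ext x; simp only [Submodule.mem_bot]
      exact ⟨fun hx => by by_contra hne; exact hne (hcon x hx), fun hx => by simp [hx]⟩
    rw [this] at hDp; simp at hDp
  set u : EuclideanSpace ℝ (Fin 2) := ‖u₀‖⁻¹ • u₀ with hu_def
  have huD : u ∈ Dᗮ := Submodule.smul_mem _ _ hu₀D
  have hu1 : ‖u‖ = 1 := by
    rw [hu_def, norm_smul, norm_inv, norm_norm]
    field_simp [norm_ne_zero_iff.2 hu₀]
  have horth : ∀ (c : ℝ), ∀ v ∈ D, ⟪c • u, v⟫ = (0:ℝ) := by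
    intro c v hv
    rw [real_inner_smul_left, real_inner_comm,
      (Submodule.mem_orthogonal D u).1 huD v hv]
    ring
  have hspan : Dᗮ = Submodule.span ℝ {u} := by
    have hle : Submodule.span ℝ {u} ≤ Dᗮ := by
      rw [Submodule.span_le]; simpa using huD
    have hu_ne : u ≠ 0 := by
      intro h; rw [h, norm_zero] at hu1; norm_num at hu1
    have h1 : Module.finrank ℝ (Submodule.span ℝ {u} : Submodule ℝ (EuclideanSpace ℝ (Fin 2))) = 1 :=
      finrank_span_singleton hu_ne
    exact (Submodule.eq_of_le_of_finrank_le hle (by rw [h1, hDp])).symm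
  set s : ℝ := ⟪B - A, u⟫ with hs_def
  have hw : B - A - s • u ∈ D := by
    have hDD : D = Dᗮᗮ := (Submodule.orthogonal_orthogonal D).symm
    rw [hDD, Submodule.mem_orthogonal]
    intro x hx
    rw [hspan, Submodule.mem_span_singleton] at hx
    obtain ⟨c, rfl⟩ := hx
    have h2 : (⟪u, B - A⟫ : ℝ) = s := by rw [hs_def, real_inner_comm]
    rw [real_inner_smul_left, inner_sub_right, real_inner_smul_right,
      real_inner_self_eq_norm_sq, hu1, h2]
    ring
  set w : EuclideanSpace ℝ (Fin 2) := B - A - s • u with hw_def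
  have hmem_qB : w + A ∈ m := by
    simpa using AffineSubspace.vadd_mem_of_mem_direction (hD ▸ hw) hAm
  have hdB : Metric.infDist B (m : Set (EuclideanSpace ℝ (Fin 2))) = |s| := by
    have hBq : B - (w + A) = s • u := by rw [hw_def]; abel
    rw [infDist_eq_of_orthogonal m B (w + A) hmem_qB ?_]
    · rw [dist_eq_norm, hBq, norm_smul, hu1, Real.norm_eq_abs, mul_one]
    · intro v hv
      rw [hBq]; exact horth s v hv
  have key : ∀ t : ℝ, |t| = r₁ → |s - t| = r₂ →
      ∃ ℓ : AffineSubspace ℝ (EuclideanSpace ℝ (Fin 2)),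
        (ℓ : Set (EuclideanSpace ℝ (Fin 2))).Nonempty ∧ ℓ.direction = D ∧
        Metric.infDist A (ℓ : Set (EuclideanSpace ℝ (Fin 2))) = r₁ ∧
        Metric.infDist B (ℓ : Set (EuclideanSpace ℝ (Fin 2))) = r₂ := by
    intro t ht hst
    have hA : A - (t • u + A) = (-t) • u := by rw [neg_smul]; abel
    have hB' : B - (t • u + (w + A)) = (s - t) • u := by rw [hw_def, sub_smul]; abel
    refine ⟨AffineSubspace.mk' (t • u + A) D, ⟨_, AffineSubspace.self_mem_mk' _ _⟩,
      AffineSubspace.direction_mk' _ _, ?_, ?_⟩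
    · rw [infDist_eq_of_orthogonal _ A (t • u + A) (AffineSubspace.self_mem_mk' _ _) ?_]
      · rw [dist_eq_norm, hA, norm_smul, hu1, Real.norm_eq_abs, mul_one, abs_neg, ht]
      · intro v hv
        rw [AffineSubspace.direction_mk'] at hv
        rw [hA]; exact horth (-t) v hv
    · have hmem : t • u + (w + A) ∈ AffineSubspace.mk' (t • u + A) D := by
        rw [AffineSubspace.mem_mk']
        have hv : t • u + (w + A) -ᵥ (t • u + A) = w := by
          rw [vsub_eq_sub]; abel
        rw [hv]; exact hw
      rw [infDist_eq_of_orthogonal _ B (t • u + (w + A)) hmem ?_]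
      · rw [dist_eq_norm, hB', norm_smul, hu1, Real.norm_eq_abs, mul_one, hst]
      · intro v hv
        rw [AffineSubspace.direction_mk'] at hv
        rw [hB']; exact horth (s - t) v hv
  rcases hB with hcase | hcase <;> rw [hdB] at hcase
  · rcases abs_cases s with ⟨hs1, hs2⟩ | ⟨hs1, hs2⟩ <;>
      rcases abs_cases (r₂ - r₁) with ⟨hr1, hr2⟩ | ⟨hr1, hr2⟩
    · exact key (-r₁) (by rw [abs_neg, abs_of_nonneg hr₁])
        (by rw [abs_of_nonneg (by linarith)]; linarith)
    · exact key r₁ (abs_of_nonneg hr₁)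
        (by rw [abs_of_nonpos (by linarith)]; linarith)
    · exact key r₁ (abs_of_nonneg hr₁)
        (by rw [abs_of_nonpos (by linarith)]; linarith)
    · exact key (-r₁) (by rw [abs_neg, abs_of_nonneg hr₁])
        (by rw [abs_of_nonneg (by linarith)]; linarith)
  · rcases abs_cases s with ⟨hs1, hs2⟩ | ⟨hs1, hs2⟩
    · exact key r₁ (abs_of_nonneg hr₁)
        (by rw [abs_of_nonneg (by linarith)]; linarith)
    · exact key (-r₁) (by rw [abs_neg, abs_of_nonneg hr₁])
        (by rw [abs_of_nonpos (by linarith)]; linarith)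
end

section
/- (Theorem, Case 2.) Let O₁, O₂ ∈ EuclideanSpace ℝ (Fin 2) with O₁ ≠ O₂, let R₁, R₂ ≥ 0, and let L, d be real numbers with 0 < L < 2·R₁ and d > 0. Consider the set S of pairs (A, C) of points such that: dist A O₁ = R₁, dist C O₂ = R₂, dist A C = d, and A + (L/d) • (C - A) lies on the circle of center O₁ and radius R₁ (i.e. the trajectory entering the first circle at A cuts a chord of length L in it, and C, at distance d from A along the trajectory, is the entrance point of the second circle). Then S is finite and has at most 4 elements. (Given the chord length in the first threat circle, the speed, and the entrance times, there are at most 4 potential trajectories/locations of the bomber.) -/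
/-!
If `A` and `A + s • (C - A)` (with `s ≠ 0`) both lie on a circle of center `O` and radius `R`,
expanding the two squared norms gives `2⟪A - O, C - A⟫ = -s ‖C - A‖²`, hence
`dist C O ^ 2 = R² + (1 - s) d²`. With `s = L / d` this radius `√(R₁² + d² - L d)` is fixed and
positive because `L < 2 R₁`, so `C` lies on the intersection of two circles with distinct centers
`O₁ ≠ O₂` (at most two choices), and then `A` lies on the intersection of the circles of radii
`R₁` about `O₁` and `d` about `C ≠ O₁` (at most two choices for each `C`).
-/

open EuclideanGeometry Module

theorem dist_sq_eq_of_chord {V : Type*} [NormedAddCommGroup V] [InnerProductSpace ℝ V]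
    {O A C : V} {R s : ℝ} (hs : s ≠ 0) (hA : dist A O = R) (hB : dist (A + s • (C - A)) O = R) :
    dist C O ^ 2 = R ^ 2 + (1 - s) * dist A C ^ 2 := by
  rw [dist_eq_norm] at hA hB
  rw [dist_eq_norm, dist_eq_norm', show C - O = (A - O) + (C - A) by abel]
  rw [show A + s • (C - A) - O = (A - O) + s • (C - A) by abel] at hB
  have hB2 := congrArg (· ^ 2) hB
  simp only [norm_add_sq_real, norm_smul, real_inner_smul_right, mul_pow, Real.norm_eq_abs,
    sq_abs, hA] at hB2
  have hinner : 2 * inner ℝ (A - O) (C - A) = -s * ‖C - A‖ ^ 2 :=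
    mul_left_cancel₀ hs (by linear_combination hB2)
  rw [norm_add_sq_real, hA, hinner]
  ring

theorem EuclideanGeometry.exists_pair_forall_dist_eq_of_finrank_eq_two {V P : Type*}
    [NormedAddCommGroup V] [InnerProductSpace ℝ V] [MetricSpace P] [NormedAddTorsor V P]
    [FiniteDimensional ℝ V] (hd : finrank ℝ V = 2) {c₁ c₂ : P} (hc : c₁ ≠ c₂) (r₁ r₂ : ℝ) :
    ∃ p₁ p₂ : P, ∀ p, dist p c₁ = r₁ → dist p c₂ = r₂ → p = p₁ ∨ p = p₂ := by
  set S := {p : P | dist p c₁ = r₁ ∧ dist p c₂ = r₂}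
  by_cases hS : S.Subsingleton
  · obtain ⟨p₀, hp₀⟩ : ∃ p₀, ∀ p ∈ S, p = p₀ := S.eq_empty_or_nonempty.elim
      (fun h => ⟨c₁, by simp [h]⟩) (fun ⟨q, hq⟩ => ⟨q, fun p hp => hS hp hq⟩)
    exact ⟨p₀, p₀, fun p h₁ h₂ => Or.inl (hp₀ p ⟨h₁, h₂⟩)⟩
  · obtain ⟨p₁, ⟨h₁₁, h₁₂⟩, p₂, ⟨h₂₁, h₂₂⟩, hp⟩ := Set.not_subsingleton_iff.1 hS
    exact ⟨p₁, p₂, fun p h₁ h₂ =>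
      eq_of_dist_eq_of_dist_eq_of_finrank_eq_two hd hc hp h₁₁ h₂₁ h₁ h₁₂ h₂₂ h₂⟩

theorem Set.finite_and_ncard_le_of_subset_finset {α : Type*} {S : Set α} {s : Finset α}
    (h : S ⊆ s) : S.Finite ∧ S.ncard ≤ s.card :=
  ⟨s.finite_toSet.subset h,
    (Set.ncard_le_ncard h s.finite_toSet).trans_eq (Set.ncard_coe_finset s)⟩

theorem case_two_at_most_four_general (O₁ O₂ : EuclideanSpace ℝ (Fin 2)) (hO : O₁ ≠ O₂)
    (R₁ R₂ : ℝ) (L d : ℝ) (hL : 0 < L) (hL2 : L < 2 * R₁) (hd : 0 < d) :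
    {AC : EuclideanSpace ℝ (Fin 2) × EuclideanSpace ℝ (Fin 2) |
        dist AC.1 O₁ = R₁ ∧ dist AC.2 O₂ = R₂ ∧ dist AC.1 AC.2 = d ∧
        dist (AC.1 + (L / d) • (AC.2 - AC.1)) O₁ = R₁}.Finite ∧
    {AC : EuclideanSpace ℝ (Fin 2) × EuclideanSpace ℝ (Fin 2) |
        dist AC.1 O₁ = R₁ ∧ dist AC.2 O₂ = R₂ ∧ dist AC.1 AC.2 = d ∧
        dist (AC.1 + (L / d) • (AC.2 - AC.1)) O₁ = R₁}.ncard ≤ 4 := by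
  have hplane : finrank ℝ (EuclideanSpace ℝ (Fin 2)) = 2 := finrank_euclideanSpace_fin
  set ρ := √(R₁ ^ 2 + (1 - L / d) * d ^ 2) with hρ_def
  have hρ : 0 < ρ := Real.sqrt_pos.2 <| by
    have : (1 - L / d) * d ^ 2 = (d - L / 2) ^ 2 - L ^ 2 / 4 := by field_simp; ring
    nlinarith [sq_nonneg (d - L / 2)]
  have hC : ∀ A C : EuclideanSpace ℝ (Fin 2), dist A O₁ = R₁ → dist A C = d →
      dist (A + (L / d) • (C - A)) O₁ = R₁ → dist C O₁ = ρ := fun A C hA hAC hB => by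
    rw [hρ_def, ← Real.sqrt_sq dist_nonneg,
      dist_sq_eq_of_chord (div_ne_zero hL.ne' hd.ne') hA hB, hAC]
  obtain ⟨c₁, c₂, hc⟩ := exists_pair_forall_dist_eq_of_finrank_eq_two hplane hO ρ R₂
  have hA : ∀ c : EuclideanSpace ℝ (Fin 2), ∃ a b : EuclideanSpace ℝ (Fin 2),
      dist c O₁ = ρ → ∀ x, dist x O₁ = R₁ → dist x c = d → x = a ∨ x = b := fun c => by
    by_cases hcO : O₁ = c
    · exact ⟨c, c, fun h => absurd (hcO ▸ h) (by simpa using hρ.ne)⟩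
    · obtain ⟨a, b, hab⟩ := exists_pair_forall_dist_eq_of_finrank_eq_two hplane hcO R₁ d
      exact ⟨a, b, fun _ => hab⟩
  obtain ⟨a₁, b₁, h₁⟩ := hA c₁
  obtain ⟨a₂, b₂, h₂⟩ := hA c₂
  refine (Set.finite_and_ncard_le_of_subset_finset
    (s := {(a₁, c₁), (b₁, c₁), (a₂, c₂), (b₂, c₂)}) ?_).imp_right (·.trans Finset.card_le_four)
  rintro ⟨A, C⟩ ⟨hAO, hCO, hAC, hB⟩
  have hCρ := hC A C hAO hAC hB
  rcases hc C hCρ hCO with rfl | rfl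
  · rcases h₁ hCρ A hAO hAC with rfl | rfl <;> simp
  · rcases h₂ hCρ A hAO hAC with rfl | rfl <;> simp

/-- Case 2: knowing the chord length `L` cut by the trajectory in the first
threat circle, and the distance `d` along the trajectory from the first
entrance point `A` to the entrance point `C` of the second threat circle,
there are at most 4 possible pairs `(A, C)`. -/
theorem case_two_at_most_four (O₁ O₂ : EuclideanSpace ℝ (Fin 2)) (hO : O₁ ≠ O₂)
    (R₁ R₂ : ℝ) (hR₁ : 0 ≤ R₁) (hR₂ : 0 ≤ R₂)
    (L d : ℝ) (hL : 0 < L) (hL2 : L < 2 * R₁) (hd : 0 < d) :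
    {AC : EuclideanSpace ℝ (Fin 2) × EuclideanSpace ℝ (Fin 2) |
        dist AC.1 O₁ = R₁ ∧ dist AC.2 O₂ = R₂ ∧ dist AC.1 AC.2 = d ∧
        dist (AC.1 + (L / d) • (AC.2 - AC.1)) O₁ = R₁}.Finite ∧
    {AC : EuclideanSpace ℝ (Fin 2) × EuclideanSpace ℝ (Fin 2) |
        dist AC.1 O₁ = R₁ ∧ dist AC.2 O₂ = R₂ ∧ dist AC.1 AC.2 = d ∧
        dist (AC.1 + (L / d) • (AC.2 - AC.1)) O₁ = R₁}.ncard ≤ 4 :=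
  case_two_at_most_four_general O₁ O₂ hO R₁ R₂ L d hL hL2 hd
end

section
/- (Case 3, forward direction: the exit point lies on the homothetic circle.) Let A, O ∈ EuclideanSpace ℝ (Fin 2), r ≥ 0, V a vector, and real times t₀ < t₁ < t₂. Define the trajectory p(t) = A + (t - t₀) • V (so p(t₀) = A), and let k = (t₂ - t₀)/(t₁ - t₀) (note k > 1). If dist (p t₁) O = r and dist (p t₂) O = r (entry and exit points of the threat circle), then dist (p t₂) (A + k • (O - A)) = k * r; that is, the exit point lies on the intersection of the threat circle with its image under the homothety of center A and ratio k. -/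
/-- Case 3, forward direction: if the trajectory `p t = A + (t - t₀) • V`
enters the threat circle (center `O`, radius `r`) at time `t₁` and exits at
time `t₂`, then with `k = (t₂ - t₀)/(t₁ - t₀)` the exit point `p t₂` lies on
the image of the threat circle under the homothety of center `A`, ratio `k`. -/
theorem exit_point_on_homothetic_circle (A O : EuclideanSpace ℝ (Fin 2))
    (r : ℝ) (hr : 0 ≤ r) (V : EuclideanSpace ℝ (Fin 2))
    (t₀ t₁ t₂ : ℝ) (h01 : t₀ < t₁) (h12 : t₁ < t₂)
    (p : ℝ → EuclideanSpace ℝ (Fin 2)) (hp : p = fun t => A + (t - t₀) • V)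
    (k : ℝ) (hk : k = (t₂ - t₀) / (t₁ - t₀))
    (h₁ : dist (p t₁) O = r) (h₂ : dist (p t₂) O = r) :
    dist (p t₂) (A + k • (O - A)) = k * r := by
  have hs₁ : (0:ℝ) < t₁ - t₀ := by linarith
  have hk' : k * (t₁ - t₀) = t₂ - t₀ := by
    rw [hk]; field_simp
  have hkpos : 0 < k := by
    rw [hk]; exact div_pos (by linarith) hs₁
  have key : p t₂ - (A + k • (O - A)) = k • (p t₁ - O) := by
    subst hp
    simp only
    rw [← hk', mul_smul]
    module
  rw [dist_eq_norm, key, norm_smul, Real.norm_eq_abs, abs_of_pos hkpos,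
    ← dist_eq_norm, h₁]
end

section
/- (Case 3, converse direction: recovering the route from the exit point.) Let A, O ∈ EuclideanSpace ℝ (Fin 2), r ≥ 0, and real times t₀ < t₁ < t₂; set k = (t₂ - t₀)/(t₁ - t₀). Suppose Y is a point with dist Y O = r and dist Y (A + k • (O - A)) = k * r. Define V = (1/(t₂ - t₀)) • (Y - A) and p(t) = A + (t - t₀) • V. Then dist (p t₁) O = r and p t₂ = Y. (Any intersection point of the threat circle with its homothetic image yields a valid route: the line AXY with X the entrance point and Y the exit point.) -/
/-! The homothety `x ↦ A + k • (x - A)` multiplies distances by `k`, so its inverse sends any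
point `Y` of the image circle back to a point of the threat circle. The trajectory through `A`
at time `t₀` and `Y` at time `t₂` traces the line `AY` affinely in time, and at time `t₁` it sits
exactly at that preimage `A + k⁻¹ • (Y - A)`. -/

open AffineMap

theorem AffineMap.dist_homothety_homothety {𝕜 V P : Type*} [NormedField 𝕜]
    [SeminormedAddCommGroup V] [NormedSpace 𝕜 V] [PseudoMetricSpace P] [NormedAddTorsor V P]
    (c p q : P) (r : 𝕜) :
    dist (homothety c r p) (homothety c r q) = ‖r‖ * dist p q := by
  rw [homothety_apply, homothety_apply, dist_vadd_cancel_right, dist_smul₀,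
    dist_vsub_cancel_right]

theorem dist_homothety_inv_of_dist_homothety {V P : Type*} [SeminormedAddCommGroup V]
    [NormedSpace ℝ V] [PseudoMetricSpace P] [NormedAddTorsor V P] {A O Y : P} {k r : ℝ}
    (hk : 0 < k) (hY : dist Y (homothety A k O) = k * r) :
    dist (homothety A k⁻¹ Y) O = r := by
  have hO : homothety A k⁻¹ (homothety A k O) = O := by
    rw [← homothety_mul_apply, inv_mul_cancel₀ hk.ne', homothety_one, id_apply]
  rw [← hO, dist_homothety_homothety, hY, Real.norm_of_nonneg (inv_nonneg.2 hk.le),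
    inv_mul_cancel_left₀ hk.ne']

theorem add_smul_one_div_smul_sub_eq_lineMap {E : Type*} [AddCommGroup E] [Module ℝ E]
    (A Y : E) (t t₀ t₂ : ℝ) :
    A + (t - t₀) • ((1 / (t₂ - t₀)) • (Y - A)) = lineMap A Y ((t - t₀) / (t₂ - t₀)) := by
  rw [lineMap_apply_module', smul_smul, mul_one_div, add_comm]

theorem route_from_exit_point_general (A O : EuclideanSpace ℝ (Fin 2)) (r : ℝ)
    (t₀ t₁ t₂ : ℝ) (h01 : t₀ < t₁) (h12 : t₁ < t₂)
    (k : ℝ) (hk : k = (t₂ - t₀) / (t₁ - t₀))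
    (Y : EuclideanSpace ℝ (Fin 2))
    (hY₂ : dist Y (A + k • (O - A)) = k * r)
    (V : EuclideanSpace ℝ (Fin 2)) (hV : V = (1 / (t₂ - t₀)) • (Y - A))
    (p : ℝ → EuclideanSpace ℝ (Fin 2)) (hp : p = fun t => A + (t - t₀) • V) :
    dist (p t₁) O = r ∧ p t₂ = Y := by
  have hp_line : ∀ t, p t = lineMap A Y ((t - t₀) / (t₂ - t₀)) := fun t => by
    subst hp hV
    exact add_smul_one_div_smul_sub_eq_lineMap A Y t t₀ t₂
  have h02 : 0 < t₂ - t₀ := by linarith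
  have h01' : 0 < t₁ - t₀ := by linarith
  refine ⟨?_, ?_⟩
  · have hk_inv : (t₁ - t₀) / (t₂ - t₀) = k⁻¹ := by rw [hk, inv_div]
    have hY : dist Y (homothety A k O) = k * r := by
      rwa [homothety_apply, vsub_eq_sub, vadd_eq_add, add_comm]
    rw [hp_line, hk_inv, ← homothety_eq_lineMap]
    exact dist_homothety_inv_of_dist_homothety (by rw [hk]; positivity) hY
  · rw [hp_line, div_self h02.ne', lineMap_apply_one]

/-- Case 3, converse direction: any point `Y` lying both on the threat circle
and on its homothetic image (center `A`, ratio `k = (t₂ - t₀)/(t₁ - t₀)`)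
yields a valid route: the trajectory through `A` at time `t₀` reaching `Y` at
time `t₂` is on the threat circle at time `t₁` and at `Y` at time `t₂`. -/
theorem route_from_exit_point (A O : EuclideanSpace ℝ (Fin 2)) (r : ℝ) (hr : 0 ≤ r)
    (t₀ t₁ t₂ : ℝ) (h01 : t₀ < t₁) (h12 : t₁ < t₂)
    (k : ℝ) (hk : k = (t₂ - t₀) / (t₁ - t₀))
    (Y : EuclideanSpace ℝ (Fin 2))
    (hY₁ : dist Y O = r) (hY₂ : dist Y (A + k • (O - A)) = k * r)
    (V : EuclideanSpace ℝ (Fin 2)) (hV : V = (1 / (t₂ - t₀)) • (Y - A))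
    (p : ℝ → EuclideanSpace ℝ (Fin 2)) (hp : p = fun t => A + (t - t₀) • V) :
    dist (p t₁) O = r ∧ p t₂ = Y :=
  route_from_exit_point_general A O r t₀ t₁ t₂ h01 h12 k hk Y hY₂ V hV p hp
end

section
/- (Theorem, Case 3: the route is determined up to finitely many choices.) Let A, O ∈ EuclideanSpace ℝ (Fin 2) with A ≠ O, let r ≥ 0, and let t₀ < t₁ < t₂ be real times. Then the set of velocity vectors V ∈ EuclideanSpace ℝ (Fin 2) such that dist (A + (t₁ - t₀) • V) O = r and dist (A + (t₂ - t₀) • V) O = r is finite and has at most 2 elements. (Given the entrance and exit times for a threat circle and one known time-stamped location A on the route, the complete route of the bomber can be calculated up to at most two possibilities.) -/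
/-!
For `s ≠ 0`, `dist (A + s • V) O = |s| * dist V (s⁻¹ • (O - A))`, so the two timing conditions
say that `V` lies on two circles, centred at `(t₁ - t₀)⁻¹ • (O - A)` and `(t₂ - t₀)⁻¹ • (O - A)`.
These centres differ because `A ≠ O` and `t₁ ≠ t₂`, and two circles with distinct centres in the
plane meet in at most two points.
-/

open EuclideanGeometry Metric Module

theorem Set.finite_and_ncard_le_two_of_eq_or_eq {α : Type*} {s : Set α}
    (h : ∀ p₁ ∈ s, ∀ p₂ ∈ s, ∀ p ∈ s, p₁ ≠ p₂ → p = p₁ ∨ p = p₂) :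
    s.Finite ∧ s.ncard ≤ 2 := by
  obtain hs | ⟨p₁, hp₁, p₂, hp₂, hne⟩ := s.subsingleton_or_nontrivial
  · have := hs.finite.to_subtype
    exact ⟨hs.finite, ((ncard_le_one_iff_subsingleton).mpr hs).trans one_le_two⟩
  · have hsub : s ⊆ {p₁, p₂} := fun p hp => h p₁ hp₁ p₂ hp₂ p hp hne
    refine ⟨(toFinite _).subset hsub, (ncard_le_ncard hsub).trans ?_⟩
    exact (ncard_insert_le p₁ {p₂}).trans (by rw [ncard_singleton])

theorem EuclideanGeometry.inter_sphere_finite_and_ncard_le_two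
    {V P : Type*} [NormedAddCommGroup V] [InnerProductSpace ℝ V] [MetricSpace P]
    [NormedAddTorsor V P] [FiniteDimensional ℝ V] (hd : finrank ℝ V = 2)
    {c₁ c₂ : P} (hc : c₁ ≠ c₂) (r₁ r₂ : ℝ) :
    (sphere c₁ r₁ ∩ sphere c₂ r₂).Finite ∧ (sphere c₁ r₁ ∩ sphere c₂ r₂).ncard ≤ 2 := by
  refine Set.finite_and_ncard_le_two_of_eq_or_eq ?_
  rintro p₁ ⟨h₁, h₁'⟩ p₂ ⟨h₂, h₂'⟩ p ⟨h, h'⟩ hne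
  exact eq_of_dist_eq_of_dist_eq_of_finrank_eq_two hd hc hne h₁ h₂ h h₁' h₂' h'

theorem dist_add_smul_eq_abs_mul {E : Type*} [NormedAddCommGroup E] [NormedSpace ℝ E]
    (A O V : E) {s : ℝ} (hs : s ≠ 0) :
    dist (A + s • V) O = |s| * dist V (s⁻¹ • (O - A)) := by
  rw [dist_eq_norm, dist_eq_norm, ← Real.norm_eq_abs, ← norm_smul, smul_sub, smul_inv_smul₀ hs]
  congr 1
  abel

theorem mem_sphere_of_dist_add_smul_eq {E : Type*} [NormedAddCommGroup E] [NormedSpace ℝ E]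
    {A O V : E} {s r : ℝ} (hs : s ≠ 0) (h : dist (A + s • V) O = r) :
    V ∈ sphere (s⁻¹ • (O - A)) (r / |s|) := by
  rw [Metric.mem_sphere, eq_div_iff (abs_ne_zero.mpr hs), mul_comm,
    ← dist_add_smul_eq_abs_mul A O V hs, h]

theorem case_three_at_most_two_routes_general (A O : EuclideanSpace ℝ (Fin 2)) (hAO : A ≠ O)
    (r : ℝ) (t₀ t₁ t₂ : ℝ) (h01 : t₀ < t₁) (h12 : t₁ < t₂) :
    {V : EuclideanSpace ℝ (Fin 2) |
        dist (A + (t₁ - t₀) • V) O = r ∧ dist (A + (t₂ - t₀) • V) O = r}.Finite ∧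
    {V : EuclideanSpace ℝ (Fin 2) |
        dist (A + (t₁ - t₀) • V) O = r ∧ dist (A + (t₂ - t₀) • V) O = r}.ncard ≤ 2 := by
  have hs₁ : t₁ - t₀ ≠ 0 := by linarith
  have hs₂ : t₂ - t₀ ≠ 0 := by linarith
  have hc : (t₁ - t₀)⁻¹ • (O - A) ≠ (t₂ - t₀)⁻¹ • (O - A) := by
    intro h
    have := inv_injective (smul_left_injective ℝ (sub_ne_zero.mpr hAO.symm) h)
    linarith
  obtain ⟨hfin, hcard⟩ := inter_sphere_finite_and_ncard_le_two finrank_euclideanSpace_fin hc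
    (r / |t₁ - t₀|) (r / |t₂ - t₀|)
  have hsub : {V : EuclideanSpace ℝ (Fin 2) |
      dist (A + (t₁ - t₀) • V) O = r ∧ dist (A + (t₂ - t₀) • V) O = r} ⊆
      sphere ((t₁ - t₀)⁻¹ • (O - A)) (r / |t₁ - t₀|) ∩
        sphere ((t₂ - t₀)⁻¹ • (O - A)) (r / |t₂ - t₀|) := fun V ⟨h₁, h₂⟩ =>
    ⟨mem_sphere_of_dist_add_smul_eq hs₁ h₁, mem_sphere_of_dist_add_smul_eq hs₂ h₂⟩
  exact ⟨hfin.subset hsub, (Set.ncard_le_ncard hsub hfin).trans hcard⟩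

/-- Case 3: given one time-stamped point `A ≠ O` on the route and the
entrance and exit times `t₁ < t₂` for the threat circle of center `O` and
radius `r`, the velocity — hence the complete route — is determined up to at
most two possibilities. -/
theorem case_three_at_most_two_routes (A O : EuclideanSpace ℝ (Fin 2)) (hAO : A ≠ O)
    (r : ℝ) (hr : 0 ≤ r) (t₀ t₁ t₂ : ℝ) (h01 : t₀ < t₁) (h12 : t₁ < t₂) :
    {V : EuclideanSpace ℝ (Fin 2) |
        dist (A + (t₁ - t₀) • V) O = r ∧ dist (A + (t₂ - t₀) • V) O = r}.Finite ∧
    {V : EuclideanSpace ℝ (Fin 2) |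
        dist (A + (t₁ - t₀) • V) O = r ∧ dist (A + (t₂ - t₀) • V) O = r}.ncard ≤ 2 :=
  case_three_at_most_two_routes_general A O hAO r t₀ t₁ t₂ h01 h12
end

section
/- (Theorem, Bonus Case: the radar center and the constructed circle's center are equidistant from the turning point.) Let u and w be unit vectors in EuclideanSpace ℝ (Fin 2), let A be a point, let b, c ≥ 0 with b + c = d, and let L ≥ 0. Set B = A + b • u (the turning point) and C = B + c • w (the entrance point on the second leg). Let O be a point and r ≥ 0 with dist C O = r and dist (C + L • w) O = r (the trajectory's second leg enters the threat circle of center O and radius r at C and travels a distance L inside it). Then there exists a point O′ such that dist (A + d • u) O′ = r, dist (A + (d + L) • u) O′ = r, and dist B O′ = dist B O. (Rotating the trajectory past B about B onto the original direction u shows that B lies on the perpendicular bisector of the segment joining O to the center O′ of the constructed circle, which is tangent to the unturned route with entrance at distance d from A and chord length L.) -/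
/-!
Reflect the plane in the perpendicular bisector of `B + w` and `B + u`. Since `‖w‖ = ‖u‖`, the
turning point `B` lies on this line, so the reflection fixes `B` and, being affine, carries the
second leg `B + t • w` onto the unturned route `B + t • u`. Taking `O′` to be the mirror image of
`O`, the two crossing points of the second leg are sent to `A + d • u` and `A + (d + L) • u`, and
all distances, in particular the one to the fixed point `B`, are preserved.
-/

open EuclideanGeometry AffineSubspace

section PerpBisectorReflection

variable {V P : Type*} [NormedAddCommGroup V] [InnerProductSpace ℝ V] [MetricSpace P]
  [NormedAddTorsor V P]

instance AffineSubspace.instNonemptyPerpBisector (p₁ p₂ : P) : Nonempty (perpBisector p₁ p₂) :=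
  perpBisector_nonempty.to_subtype

theorem reflection_perpBisector_left (p₁ p₂ : P)
    [(perpBisector p₁ p₂).direction.HasOrthogonalProjection] :
    reflection (perpBisector p₁ p₂) p₁ = p₂ := by
  set m := midpoint ℝ p₁ p₂
  have hv : p₁ -ᵥ m ∈ (perpBisector p₁ p₂).directionᗮ := by
    rw [direction_perpBisector, left_vsub_midpoint]
    refine Submodule.le_orthogonal_orthogonal _ (Submodule.mem_span_singleton.2 ⟨-⅟2, ?_⟩)
    rw [neg_smul, ← smul_neg, neg_vsub_eq_vsub_rev]
  calc reflection (perpBisector p₁ p₂) p₁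
        = reflection (perpBisector p₁ p₂) ((p₁ -ᵥ m) +ᵥ m) := by rw [vsub_vadd]
    _ = p₂ := by
      rw [reflection_orthogonal_vadd (midpoint_mem_perpBisector _ _) hv, neg_vsub_eq_vsub_rev,
        midpoint_vsub_left, ← right_vsub_midpoint, vsub_vadd]

theorem reflection_perpBisector_lineMap {p₀ p₁ p₂ : P} (h : dist p₀ p₁ = dist p₀ p₂)
    [(perpBisector p₁ p₂).direction.HasOrthogonalProjection] (t : ℝ) :
    reflection (perpBisector p₁ p₂) (AffineMap.lineMap p₀ p₁ t) = AffineMap.lineMap p₀ p₂ t := by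
  have h₀ : reflection (perpBisector p₁ p₂) p₀ = p₀ :=
    (reflection_eq_self_iff p₀).2 (mem_perpBisector_iff_dist_eq.2 h)
  have hmap := AffineMap.apply_lineMap
    (reflection (perpBisector p₁ p₂)).toAffineEquiv.toAffineMap p₀ p₁ t
  simp only [AffineEquiv.coe_toAffineMap, AffineIsometryEquiv.coe_toAffineEquiv] at hmap
  rw [hmap, h₀, reflection_perpBisector_left]

end PerpBisectorReflection

theorem bonus_case_reflected_center_general (u w : EuclideanSpace ℝ (Fin 2))
    (hu : ‖u‖ = 1) (hw : ‖w‖ = 1) (A : EuclideanSpace ℝ (Fin 2))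
    (b c d : ℝ) (hbc : b + c = d) (L : ℝ)
    (B C : EuclideanSpace ℝ (Fin 2)) (hB : B = A + b • u) (hC : C = B + c • w)
    (O : EuclideanSpace ℝ (Fin 2)) (r : ℝ)
    (hCO : dist C O = r) (hExit : dist (C + L • w) O = r) :
    ∃ O' : EuclideanSpace ℝ (Fin 2),
      dist (A + d • u) O' = r ∧ dist (A + (d + L) • u) O' = r ∧
      dist B O' = dist B O := by
  set s := perpBisector (B + w) (B + u)
  have hB_equidistant : dist B (B + w) = dist B (B + u) := by
    rw [dist_self_add_right, dist_self_add_right, hw, hu]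
  have hturn (t : ℝ) : reflection s (B + t • w) = B + t • u := by
    have h := reflection_perpBisector_lineMap hB_equidistant t
    rwa [AffineMap.lineMap_apply_module', AffineMap.lineMap_apply_module', add_sub_cancel_left,
      add_sub_cancel_left, add_comm (t • w), add_comm (t • u)] at h
  have hentry : A + d • u = reflection s C := by
    rw [hC, hturn, hB, ← hbc]; module
  have hexit : A + (d + L) • u = reflection s (C + L • w) := by
    rw [hC, add_assoc, ← add_smul, hturn, hB, ← hbc]; module
  refine ⟨reflection s O, ?_, ?_, ?_⟩
  · rw [hentry, (reflection s).dist_map, hCO]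
  · rw [hexit, (reflection s).dist_map, hExit]
  · exact dist_reflection_eq_of_mem s (mem_perpBisector_iff_dist_eq.2 hB_equidistant) O

/-- Bonus Case: the bomber starts at `A` in unit direction `u`, turns at
`B = A + b • u` to unit direction `w`, enters the threat circle (center `O`,
radius `r`) at `C = B + c • w` with `b + c = d`, and travels a distance `L`
inside it. Then there is a circle of the same radius `r`, with center `O′`
equidistant from `B` with `O`, tangent data matching the unturned route:
its entrance point is `A + d • u` and the chord there has length `L`. -/
theorem bonus_case_reflected_center (u w : EuclideanSpace ℝ (Fin 2))
    (hu : ‖u‖ = 1) (hw : ‖w‖ = 1) (A : EuclideanSpace ℝ (Fin 2))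
    (b c d : ℝ) (hb : 0 ≤ b) (hc : 0 ≤ c) (hbc : b + c = d) (L : ℝ) (hL : 0 ≤ L)
    (B C : EuclideanSpace ℝ (Fin 2)) (hB : B = A + b • u) (hC : C = B + c • w)
    (O : EuclideanSpace ℝ (Fin 2)) (r : ℝ) (hr : 0 ≤ r)
    (hCO : dist C O = r) (hExit : dist (C + L • w) O = r) :
    ∃ O' : EuclideanSpace ℝ (Fin 2),
      dist (A + d • u) O' = r ∧ dist (A + (d + L) • u) O' = r ∧
      dist B O' = dist B O :=
  bonus_case_reflected_center_general u w hu hw A b c d hbc L B C hB hC O r hCO hExit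
end
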